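/- Let ε > 0, ε' = ε/(5+4ε), and suppose real numbers satisfy: σ(i) > (1/2 − 2ε')·D, w(i) ≤ (1/2 + 2ε')·D, 0 < h(i) ≤ OPT/4, and the total item area satisfies area > σ(i)·((3/2+ε)·OPT − h(i)) + ((1−ε')·D − σ(i))·(OPT/2 + h(i)). Then area > D·OPT. -/
import Mathlib


/-- a purely algebraic inequality: with `ε' = ε/(5+4ε)`, if
`σᵢ > (1/2 - 2ε')D`, `wᵢ ≤ (1/2 + 2ε')D`, `0 < hᵢ ≤ OPT/4` and
`area > σᵢ((3/2+ε)OPT - hᵢ) + ((1-ε')D - σᵢ)(OPT/2 + hᵢ)`, then `area > D * OPT`. -/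
theorem stmt_4 (D OPT ε ε' s wi hi area : ℝ)
    (hD : 0 < D) (hOPT : 0 < OPT) (hε : 0 < ε) (hε' : ε' = ε / (5 + 4*ε))
    (hs : (1/2 - 2*ε') * D < s) (hwi : wi ≤ (1/2 + 2*ε') * D)
    (hhi : 0 < hi) (hhi' : hi ≤ OPT / 4)
    (harea : s * ((3/2 + ε) * OPT - hi) + ((1 - ε') * D - s) * (OPT/2 + hi) < area) :
    D * OPT < area := by
  have h5 : (0:ℝ) < 5 + 4*ε := by linarith
  have hq : ε' * (5 + 4*ε) = ε := by rw [hε']; field_simp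
  have hε'pos : 0 < ε' := by rw [hε']; positivity
  have hcoef : 0 < (1+ε)*OPT - 2*hi := by nlinarith
  have h1 : 0 < (s - (1/2 - 2*ε')*D) * ((1+ε)*OPT - 2*hi) := by
    apply mul_pos (by linarith) hcoef
  nlinarith [mul_pos (mul_pos hD hhi) hε'pos, mul_pos hD hOPT,
    mul_pos (mul_pos hD hOPT) hε'pos]
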